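/- The module M_B is invariant under the order-5 rotation given by the matrix (1/2)·[[τ, −1, −τ'], [1, −τ', −τ], [−τ', τ, 1]] and under the order-2 rotation diag(−1, −1, 1); i.e., each of these matrices maps M_B onto itself. -/

import Mathlib

noncomputable def τ : ℝ := (1 + Real.sqrt 5) / 2

noncomputable def τ' : ℝ := 1 - τ

/-- The ring `ℤ[τ]`, as a subset of `ℝ`. -/
def Ztau : Set ℝ := {x | ∃ a b : ℤ, x = (a : ℝ) + (b : ℝ) * τ}

/-- The standard body-centred icosahedral module `M_B`. -/
def MB : Set (Fin 3 → ℝ) :=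
  {v | (∀ i, v i ∈ Ztau) ∧ ∃ w ∈ Ztau, τ ^ 2 * v 0 + τ * v 1 + v 2 = 2 * w}

/-- The order-5 rotation generating (together with `diag(-1,-1,1)`) the
icosahedral rotation group `Y`. -/
noncomputable def R5 : Matrix (Fin 3) (Fin 3) ℝ :=
  (1 / 2 : ℝ) • !![τ, -1, -τ'; 1, -τ', -τ; -τ', τ, 1]

/-- The order-2 rotation `diag(-1,-1,1)`. -/
def R2 : Matrix (Fin 3) (Fin 3) ℝ := !![-1, 0, 0; 0, -1, 0; 0, 0, 1]

/-!
Put `c = τ² v₀ + τ v₁ + v₂ ∈ 2ℤ[τ]`. Each coordinate of `2 R5 v` (and of `2 R5ᵀ v`) is `u c`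
plus twice an element of `ℤ[τ]`, where `u` is one of the units `1`, `τ⁻¹ = τ - 1`,
`τ⁻² = 2 - τ`; so `R5` and `R5ᵀ = R5⁻¹` map `M_B` into itself, hence `R5` maps it onto itself.
`R2` is an involution visibly preserving `M_B`.
-/

open Set Matrix

lemma tau_sq : τ ^ 2 = τ + 1 := by
  have h5 : Real.sqrt 5 ^ 2 = 5 := Real.sq_sqrt (by norm_num)
  unfold τ
  linear_combination h5 / 4

def Ztau.subring : Subring ℝ where
  carrier := Ztau
  mul_mem' := by
    rintro _ _ ⟨a, b, rfl⟩ ⟨c, d, rfl⟩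
    exact ⟨a * c + b * d, a * d + b * c + b * d, by
      push_cast
      linear_combination (b * d : ℝ) * tau_sq⟩
  one_mem' := ⟨1, 0, by simp⟩
  add_mem' := by
    rintro _ _ ⟨a, b, rfl⟩ ⟨c, d, rfl⟩
    exact ⟨a + c, b + d, by push_cast; ring⟩
  zero_mem' := ⟨0, 0, by simp⟩
  neg_mem' := by
    rintro _ ⟨a, b, rfl⟩
    exact ⟨-a, -b, by push_cast; ring⟩

lemma Ztau.tau_mem : τ ∈ Ztau.subring := ⟨0, 1, by simp⟩

lemma vec_mem_MB {x y z w : ℝ} (hx : x ∈ Ztau.subring) (hy : y ∈ Ztau.subring)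
    (hz : z ∈ Ztau.subring) (hw : w ∈ Ztau.subring) (h : τ ^ 2 * x + τ * y + z = 2 * w) :
    ![x, y, z] ∈ MB :=
  ⟨fun i => by fin_cases i <;> assumption, w, hw, h⟩

lemma Matrix.image_mulVec_eq_of_mul_eq_one {n R : Type*} [Fintype n] [DecidableEq n]
    [CommRing R] {A B : Matrix n n R} {S : Set (n → R)} (hAB : A * B = 1)
    (hA : MapsTo (A *ᵥ ·) S S) (hB : MapsTo (B *ᵥ ·) S S) : (A *ᵥ ·) '' S = S :=
  (InvOn.bijOn (f' := (B *ᵥ ·))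
    ⟨fun v _ => by simp [mulVec_mulVec, mul_eq_one_comm.mp hAB],
      fun v _ => by simp [mulVec_mulVec, hAB]⟩ hA hB).image_eq

lemma mulVec_R5 (v : Fin 3 → ℝ) :
    R5 *ᵥ v = ![(τ * v 0 - v 1 - τ' * v 2) / 2, (v 0 - τ' * v 1 - τ * v 2) / 2,
      (-τ' * v 0 + τ * v 1 + v 2) / 2] := by
  ext i
  fin_cases i <;>
    simp only [R5, mulVec, dotProduct, Fin.sum_univ_three, Matrix.smul_apply, of_apply, cons_val',
      cons_val_fin_one, cons_val_zero, cons_val_one, cons_val, smul_eq_mul, Fin.zero_eta, Fin.mk_one,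
      Fin.reduceFinMk, Fin.isValue] <;>
    ring

lemma mulVec_R5_transpose (v : Fin 3 → ℝ) :
    R5ᵀ *ᵥ v = ![(τ * v 0 + v 1 - τ' * v 2) / 2, (-v 0 - τ' * v 1 + τ * v 2) / 2,
      (-τ' * v 0 - τ * v 1 + v 2) / 2] := by
  ext i
  fin_cases i <;>
    simp only [R5, mulVec, dotProduct, transpose_apply, Fin.sum_univ_three, Matrix.smul_apply,
      of_apply, cons_val', cons_val_fin_one, cons_val_zero, cons_val_one, cons_val, smul_eq_mul, Fin.zero_eta, Fin.mk_one,
      Fin.reduceFinMk, Fin.isValue] <;>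
    ring

lemma R5_mul_transpose : R5 * R5ᵀ = 1 := by
  ext i j
  fin_cases i <;> fin_cases j <;>
    simp only [R5, τ', mul_apply, transpose_apply, one_apply_eq, one_apply_ne, ne_eq, Fin.reduceEq,
      not_false_eq_true, Fin.sum_univ_three, Matrix.smul_apply, of_apply, cons_val',
      cons_val_fin_one, cons_val_zero, cons_val_one, cons_val, smul_eq_mul, Fin.zero_eta, Fin.mk_one,
      Fin.reduceFinMk, Fin.isValue] <;>
    linarith [tau_sq]

lemma mapsTo_R5 : MapsTo (R5 *ᵥ ·) MB MB := by
  rintro v ⟨hv, w, hw, hc⟩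
  have e0 : (τ * v 0 - v 1 - τ' * v 2) / 2 = (τ - 1) * w - v 1 := by
    unfold τ'
    linear_combination (τ - 1) / 2 * hc - (τ * v 0 + v 1) / 2 * tau_sq
  have e1 : (v 0 - τ' * v 1 - τ * v 2) / 2 = (2 - τ) * w - v 2 := by
    unfold τ'
    linear_combination (2 - τ) / 2 * hc + ((τ - 1) * v 0 + v 1) / 2 * tau_sq
  have e2 : (-τ' * v 0 + τ * v 1 + v 2) / 2 = w - v 0 := by
    unfold τ'
    linear_combination 1 / 2 * hc - v 0 / 2 * tau_sq
  have e : τ ^ 2 * ((τ - 1) * w - v 1) + τ * ((2 - τ) * w - v 2) + (w - v 0) = 2 * (τ * v 0) := by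
    linear_combination -τ * hc + ((τ + 1) * v 0 + (τ - 1) * w) * tau_sq
  dsimp only
  rw [mulVec_R5, e0, e1, e2]
  refine vec_mem_MB ?_ ?_ ?_ ?_ e <;>
    apply_rules [Ztau.tau_mem, hv, hw, add_mem, sub_mem, neg_mem, mul_mem, one_mem, ofNat_mem]

lemma mapsTo_R5_transpose : MapsTo (R5ᵀ *ᵥ ·) MB MB := by
  rintro v ⟨hv, w, hw, hc⟩
  have e0 : (τ * v 0 + v 1 - τ' * v 2) / 2 = (τ - 1) * w := by
    unfold τ'
    linear_combination (τ - 1) / 2 * hc - (τ * v 0 + v 1) / 2 * tau_sq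
  have e1 : (-v 0 - τ' * v 1 + τ * v 2) / 2 = (2 - τ) * w - v 0 + (τ - 1) * v 2 := by
    unfold τ'
    linear_combination (2 - τ) / 2 * hc + ((τ - 1) * v 0 + v 1) / 2 * tau_sq
  have e2 : (-τ' * v 0 - τ * v 1 + v 2) / 2 = w - v 0 - τ * v 1 := by
    unfold τ'
    linear_combination 1 / 2 * hc - v 0 / 2 * tau_sq
  have e : τ ^ 2 * ((τ - 1) * w) + τ * ((2 - τ) * w - v 0 + (τ - 1) * v 2) + (w - v 0 - τ * v 1)
      = 2 * ((τ - 1) * w + v 2) := by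
    linear_combination -hc + (v 0 + v 2 + (τ - 1) * w) * tau_sq
  dsimp only
  rw [mulVec_R5_transpose, e0, e1, e2]
  refine vec_mem_MB ?_ ?_ ?_ ?_ e <;>
    apply_rules [Ztau.tau_mem, hv, hw, add_mem, sub_mem, neg_mem, mul_mem, one_mem, ofNat_mem]

lemma mulVec_R2 (v : Fin 3 → ℝ) : R2 *ᵥ v = ![-v 0, -v 1, v 2] := by
  ext i
  fin_cases i <;> simp [R2, mulVec, dotProduct, Fin.sum_univ_three]

lemma R2_mul_self : R2 * R2 = 1 := by
  rw [R2, mul_fin_three, one_fin_three]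
  norm_num

lemma mapsTo_R2 : MapsTo (R2 *ᵥ ·) MB MB := by
  rintro v ⟨hv, w, hw, hc⟩
  dsimp only
  rw [mulVec_R2]
  refine vec_mem_MB (neg_mem (hv 0)) (neg_mem (hv 1)) (hv 2) (sub_mem (hv 2) hw) ?_
  linear_combination -hc

/-- `M_B` is invariant under the order-5 rotation `R5` and the order-2
rotation `R2`: each maps `M_B` onto itself. -/
theorem MB_invariant :
    (fun v => R5.mulVec v) '' MB = MB ∧ (fun v => R2.mulVec v) '' MB = MB :=
  ⟨image_mulVec_eq_of_mul_eq_one R5_mul_transpose mapsTo_R5 mapsTo_R5_transpose,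
    image_mulVec_eq_of_mul_eq_one R2_mul_self mapsTo_R2 mapsTo_R2⟩
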